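/- For the posterior probability f(H) = (1 + (1/(1+H))·p^(-H/(1+H)))⁻¹ with fixed p ∈ (0, 1/e), the infimum over H ≥ 0 is bounded below by the Sellke–Bayarri–Berger bound (1 - 1/(e·p·ln p))⁻¹. -/

import Mathlib

open Real

lemma aux_mul_exp_neg_le (u : ℝ) : u * Real.exp (-u) ≤ (Real.exp 1)⁻¹ := by
  have h := Real.add_one_le_exp (u - 1)
  have h1 : Real.exp (u - 1) = Real.exp u * (Real.exp 1)⁻¹ := by
    rw [Real.exp_sub]; ring
  have hu : (0:ℝ) < Real.exp u := Real.exp_pos u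
  have he : (0:ℝ) < Real.exp 1 := Real.exp_pos 1
  rw [Real.exp_neg, ← div_eq_mul_inv, div_le_iff₀ hu]
  rw [h1] at h
  nlinarith

/-- Sellke–Bayarri–Berger bound: for fixed `p ∈ (0, 1/e)`, the posterior probability
`f(H) = (1 + (1/(1+H))·p^(-H/(1+H)))⁻¹` is bounded below over `H ≥ 0` by
`(1 - 1/(e·p·ln p))⁻¹`. -/
theorem posterior_lower_bound (p : ℝ) (hp0 : 0 < p) (hp1 : p < 1 / Real.exp 1) :
    ∀ H : ℝ, 0 ≤ H →
      (1 + (1 / (1 + H)) * p ^ (-(H / (1 + H))))⁻¹ ≥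
        (1 - 1 / (Real.exp 1 * p * Real.log p))⁻¹ := by
  intro H hH
  set L := Real.log p with hLdef
  have he : (0:ℝ) < Real.exp 1 := Real.exp_pos 1
  have hL : L < -1 := by
    have h := Real.log_lt_log hp0 hp1
    rw [one_div, Real.log_inv, Real.log_exp] at h
    exact h
  have hnegL : (0:ℝ) < -L := by linarith
  have h1H : (0:ℝ) < 1 + H := by linarith
  have hs : (0:ℝ) < 1/(1+H) := by positivity
  have hst : -(H/(1+H)) = (1/(1+H)) - 1 := by field_simp; ring
  have hrpow : p ^ (-(H/(1+H))) = Real.exp (L * (1/(1+H)) + (-L)) := by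
    rw [Real.rpow_def_of_pos hp0, hst, ← hLdef]; ring_nf
  have hexp : Real.exp (L * (1/(1+H)) + (-L)) =
      Real.exp (L * (1/(1+H))) * p⁻¹ := by
    rw [Real.exp_add, Real.exp_neg, Real.exp_log hp0]
  have hE : (0:ℝ) < Real.exp (L * (1/(1+H))) := Real.exp_pos _
  -- key bound on the term
  have hu := aux_mul_exp_neg_le (-(L * (1/(1+H))))
  rw [neg_neg] at hu
  -- hu : -(L * s) * exp (L * s) ≤ (exp 1)⁻¹
  have key : (1/(1+H)) * p ^ (-(H/(1+H))) ≤ (Real.exp 1 * p * (-L))⁻¹ := by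
    rw [hrpow, hexp]
    have h2 : (1/(1+H)) * Real.exp (L * (1/(1+H))) ≤ (Real.exp 1)⁻¹ * (-L)⁻¹ := by
      rw [← div_eq_mul_inv, le_div_iff₀ hnegL]
      calc (1/(1+H)) * Real.exp (L * (1/(1+H))) * -L
          = -(L * (1/(1+H))) * Real.exp (L * (1/(1+H))) := by ring
        _ ≤ (Real.exp 1)⁻¹ := hu
    calc (1/(1+H)) * (Real.exp (L * (1/(1+H))) * p⁻¹)
        = ((1/(1+H)) * Real.exp (L * (1/(1+H)))) * p⁻¹ := by ring
      _ ≤ ((Real.exp 1)⁻¹ * (-L)⁻¹) * p⁻¹ := by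
          apply mul_le_mul_of_nonneg_right h2 (by positivity)
      _ = (Real.exp 1 * p * (-L))⁻¹ := by
          field_simp
  have hgpos : (0:ℝ) < (1/(1+H)) * p ^ (-(H/(1+H))) := by positivity
  have heq : 1 - 1 / (Real.exp 1 * p * L) = 1 + (Real.exp 1 * p * (-L))⁻¹ := by
    have h3 : Real.exp 1 * p * -L = -(Real.exp 1 * p * L) := by ring
    rw [h3, ← one_div, div_neg]; ring
  rw [heq]
  have h01 : (0:ℝ) < 1 + (1/(1+H)) * p ^ (-(H/(1+H))) := by linarith
  exact inv_anti₀ h01 (by linarith)
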